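/- arXiv:2602.11135 — 4 statements merged into one kernel-verified Lean document; each statement's English description precedes it below -/
import Mathlib

section
/- Let l be an odd prime and s ≥ 1. If l^s divides m^i − m^j for every nonzero integer m (where i > j ≥ 1), then (l−1)·l^{s−1} divides i − j. -/
/-- Let `l` be an odd prime and `s ≥ 1`. If `l^s` divides `m^i − m^j` for every nonzero
integer `m` (where `i > j ≥ 1`), then `(l−1)·l^(s−1)` divides `i − j`. -/
theorem stmt_0 (l s i j : ℕ) (hl : l.Prime) (hlodd : Odd l) (hs : 1 ≤ s)
    (hij : j < i) (hj : 1 ≤ j)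
    (hdvd : ∀ m : ℤ, m ≠ 0 → ((l : ℤ) ^ s ∣ m ^ i - m ^ j)) :
    (l - 1) * l ^ (s - 1) ∣ i - j := by
  have hl2 : 2 ≤ l := hl.two_le
  have hlZ : Prime (l : ℤ) := Nat.prime_iff_prime_int.mp hl
  set d := i - j with hd
  have hdpos : 0 < d := by omega
  have hid : i = j + d := by omega
  -- key reduction: for m not divisible by l, l^s ∣ m^d - 1
  have key : ∀ m : ℤ, m ≠ 0 → ¬ (l : ℤ) ∣ m → (l : ℤ) ^ s ∣ m ^ d - 1 := by
    intro m hm hcop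
    have h1 := hdvd m hm
    have h2 : m ^ i - m ^ j = m ^ j * (m ^ d - 1) := by
      rw [hid, pow_add]; ring
    rw [h2] at h1
    have hc : IsCoprime ((l : ℤ) ^ s) (m ^ j) :=
      (hlZ.coprime_iff_not_dvd.mpr hcop).pow (m := s) (n := j)
    exact hc.dvd_of_dvd_mul_left h1
  haveI : Fact l.Prime := ⟨hl⟩
  -- Part 1 : l - 1 ∣ d
  have part1 : l - 1 ∣ d := by
    obtain ⟨g, hg⟩ := IsCyclic.exists_generator (α := (ZMod l)ˣ)
    set m : ℤ := ((g : ZMod l).val : ℤ) with hm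
    have hcast : ((m : ℤ) : ZMod l) = (g : ZMod l) := by
      rw [hm]; push_cast
      exact ZMod.natCast_rightInverse (g : ZMod l)
    have hndvd : ¬ (l : ℤ) ∣ m := by
      intro h
      have h0 : ((m : ℤ) : ZMod l) = 0 :=
        (ZMod.intCast_zmod_eq_zero_iff_dvd m l).mpr h
      exact g.ne_zero (hcast ▸ h0)
    have hmne : m ≠ 0 := fun h => hndvd (h ▸ dvd_zero _)
    have h1 : (l : ℤ) ∣ m ^ d - 1 :=
      dvd_trans (dvd_pow_self (l : ℤ) (by omega : s ≠ 0)) (key m hmne hndvd)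
    have h2 : ((m : ℤ) : ZMod l) ^ d = 1 := by
      have h3 := (ZMod.intCast_zmod_eq_zero_iff_dvd (m ^ d - 1) l).mpr h1
      push_cast at h3
      rwa [sub_eq_zero] at h3
    have h3 : g ^ d = 1 := by
      apply Units.ext
      push_cast
      rw [← hcast]; exact h2
    have h4 : orderOf g ∣ d := orderOf_dvd_of_pow_eq_one h3
    rwa [orderOf_eq_card_of_forall_mem_zpowers hg, Nat.card_eq_fintype_card, ZMod.card_units_eq_totient,
      Nat.totient_prime hl] at h4
  -- Part 2 : l ^ (s-1) ∣ d
  have part2 : l ^ (s - 1) ∣ d := by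
    have hndvd : ¬ (l : ℤ) ∣ (1 + l : ℤ) := by
      intro h
      have h1 : (l : ℤ) ∣ 1 := (dvd_add_right (dvd_refl (l : ℤ))).mp (by rwa [add_comm] at h)
      have h2 := Int.le_of_dvd one_pos h1
      omega
    have hmne : (1 + (l : ℤ)) ≠ 0 := by positivity
    have hdd : (l : ℤ) ^ s ∣ (1 + (l : ℤ)) ^ d - 1 ^ d := by
      simpa using key (1 + l) hmne hndvd
    have hlte := Int.emultiplicity_pow_sub_pow hl hlodd
      (x := 1 + (l : ℤ)) (y := 1) (by simp) hndvd d
    have hle : (s : ℕ∞) ≤ emultiplicity ((l : ℤ)) ((1 + (l : ℤ)) ^ d - 1 ^ d) :=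
      le_emultiplicity_of_pow_dvd hdd
    rw [hlte] at hle
    have hself : emultiplicity ((l : ℤ)) ((1 + (l : ℤ)) - 1) = 1 := by
      rw [add_sub_cancel_left]
      exact (Int.finiteMultiplicity_iff.mpr
        ⟨by simpa using hl.ne_one, by exact_mod_cast hl.ne_zero⟩).emultiplicity_self
    rw [hself] at hle
    have hfin : FiniteMultiplicity l d :=
      Nat.finiteMultiplicity_iff.mpr ⟨hl.ne_one, hdpos⟩
    have hk := hfin.emultiplicity_eq_multiplicity
    rw [hk] at hle
    have hsle : s ≤ 1 + multiplicity l d := by exact_mod_cast hle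
    apply pow_dvd_of_le_emultiplicity (a := l) (b := d) (k := s - 1)
    rw [hk]
    exact_mod_cast (by omega : s - 1 ≤ multiplicity l d)
  have hcop : (l - 1).Coprime (l ^ (s - 1)) := by
    apply Nat.Coprime.pow_right
    have hnd : ¬ l ∣ (l - 1) := fun h => by
      have := Nat.le_of_dvd (by omega) h; omega
    exact ((Nat.Prime.coprime_iff_not_dvd hl).mpr hnd).symm
  exact hcop.mul_dvd_of_dvd_of_dvd part1 part2
end

section
/- Let s > 2 and i > j ≥ 1. If 2^s divides m^i − m^j for every odd integer m, then 2^{s−2} divides i − j. -/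
/-- Let `s > 2` and `i > j ≥ 1`. If `2^s` divides `m^i − m^j` for every odd integer `m`,
then `2^(s−2)` divides `i − j`. -/
theorem stmt_1 (s i j : ℕ) (hs : 2 < s) (hij : j < i) (hj : 1 ≤ j)
    (hdvd : ∀ m : ℤ, Odd m → ((2 : ℤ) ^ s ∣ m ^ i - m ^ j)) :
    2 ^ (s - 2) ∣ i - j := by
  set d := i - j with hd
  have hi : i = j + d := by omega
  have h5 : (2:ℤ)^s ∣ 5 ^ i - 5 ^ j := hdvd 5 (by decide)
  have hcop : IsCoprime ((2:ℤ)^s) ((5:ℤ)^j) := by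
    apply IsCoprime.pow
    rw [Int.isCoprime_iff_gcd_eq_one]; decide
  have h5' : (2:ℤ)^s ∣ 5 ^ d - 1 := by
    have heq : (5:ℤ)^i - 5^j = 5^j * (5^d - 1) := by rw [hi, pow_add]; ring
    rw [heq] at h5
    exact hcop.dvd_of_dvd_mul_left h5
  have hle : (s : ℕ∞) ≤ emultiplicity 2 ((5:ℤ) ^ d - 1) :=
    pow_dvd_iff_le_emultiplicity.mp h5'
  have hmul : emultiplicity 2 ((5:ℤ) ^ d - 1) = 2 + emultiplicity (2:ℤ) d := by
    have := Int.two_pow_sub_pow' (x := (5:ℤ)) (y := 1) d (by norm_num) (by norm_num)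
    rw [one_pow] at this
    rw [this]
    congr 1
    have : (5:ℤ) - 1 = 2^2 := by norm_num
    rw [this, emultiplicity_pow_self_of_prime Int.prime_two]
    rfl
  rw [hmul] at hle
  have h2 : ((s - 2 : ℕ) : ℕ∞) ≤ emultiplicity (2:ℤ) (d : ℤ) := by
    rcases eq_or_ne (emultiplicity (2:ℤ) (d : ℤ)) ⊤ with h | h
    · simp [h]
    · lift emultiplicity (2:ℤ) (d : ℤ) to ℕ using h with k hk
      have : (s : ℕ∞) ≤ ((2 + k : ℕ) : ℕ∞) := by push_cast; exact hle
      have hsk : s ≤ 2 + k := by exact_mod_cast this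
      exact_mod_cast Nat.cast_le.mpr (by omega : s - 2 ≤ k)
  have hled : (2:ℤ) ^ (s - 2) ∣ (d : ℤ) := pow_dvd_iff_le_emultiplicity.mpr h2
  exact_mod_cast hled
end

section
/- Let i > j ≥ 0, let M be an abelian group, and let f : Z∖{0} → M satisfy f(mn) = m^j f(n) + n^i f(m) for all nonzero m, n. Then there exists b ∈ M such that w_{i,j}·f(n) = (n^i − n^j)·b for all nonzero n, where w_{i,j} = gcd_{m≠0}(m^i − m^j). In particular w_{i,j}·f is a coboundary. -/
/-- Let `i > j ≥ 0`, `M` an abelian group, and `f : ℤ∖{0} → M` a 1-cocycle of level `(i,j)`: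
`f(mn) = m^j • f(n) + n^i • f(m)`. Let `w = w_{i,j}` be the gcd over nonzero `m` of
`m^i − m^j`. Then there exists `b ∈ M` with `w • f(n) = (n^i − n^j) • b` for all `n ≠ 0`;
in particular `w • f` is a (refined) coboundary. -/
theorem stmt_6 {M : Type*} [AddCommGroup M] (i j : ℕ) (hij : j < i)
    (w : ℕ)
    (hw1 : ∀ m : ℤ, m ≠ 0 → (w : ℤ) ∣ m ^ i - m ^ j)
    (hw2 : ∀ d : ℤ, (∀ m : ℤ, m ≠ 0 → d ∣ m ^ i - m ^ j) → d ∣ (w : ℤ))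
    (f : ℤ → M)
    (hf : ∀ m n : ℤ, m ≠ 0 → n ≠ 0 → f (m * n) = m ^ j • f n + n ^ i • f m) :
    ∃ b : M, ∀ n : ℤ, n ≠ 0 → (w : ℤ) • f n = (n ^ i - n ^ j) • b := by
  -- symmetry identity
  have sym : ∀ m n : ℤ, m ≠ 0 → n ≠ 0 →
      (m ^ i - m ^ j) • f n = (n ^ i - n ^ j) • f m := by
    intro m n hm hn
    have h1 := hf m n hm hn
    have h2 := hf n m hn hm
    rw [mul_comm] at h2
    rw [h1] at h2
    rw [sub_smul, sub_smul]
    -- h2 : n ^ j • f m + m ^ i • f n = m ^ j • f n + n ^ i • f m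
    have := sub_eq_sub_iff_add_eq_add.mpr h2.symm
    linear_combination (norm := abel) this
  -- the ideal of good coefficients
  let I : Ideal ℤ :=
    { carrier := {c | ∃ b : M, ∀ n : ℤ, n ≠ 0 → c • f n = (n ^ i - n ^ j) • b}
      zero_mem' := ⟨0, fun n _ => by simp⟩
      add_mem' := by
        rintro a b ⟨x, hx⟩ ⟨y, hy⟩
        exact ⟨x + y, fun n hn => by rw [add_smul, hx n hn, hy n hn, smul_add]⟩
      smul_mem' := by
        rintro c a ⟨x, hx⟩
        refine ⟨c • x, fun n hn => ?_⟩
        have : (c • a) • f n = c • (a • f n) := by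
          rw [smul_eq_mul, mul_smul]
        rw [this, hx n hn, smul_comm] }
  obtain ⟨g, hg⟩ := (IsPrincipalIdealRing.principal I).principal
  have hgen : ∀ m : ℤ, m ≠ 0 → (m ^ i - m ^ j) ∈ I := by
    intro m hm
    exact ⟨f m, fun n hn => sym m n hm hn⟩
  have hgdvd : ∀ m : ℤ, m ≠ 0 → g ∣ m ^ i - m ^ j := by
    intro m hm
    have := hgen m hm
    rw [hg, Ideal.submodule_span_eq, Ideal.mem_span_singleton] at this
    exact this
  have hgw : g ∣ (w : ℤ) := hw2 g hgdvd
  have hwI : (w : ℤ) ∈ I := by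
    rw [hg, Ideal.submodule_span_eq, Ideal.mem_span_singleton]
    exact hgw
  exact hwI
end

section
/- Let M be an abelian group, α ∈ M ⊗ Q, and N a positive integer. If the image of α in M ⊗ Q_l/Z_l vanishes for every prime l not dividing N, then α is integral with respect to M[1/N] = M ⊗ Z[1/N], i.e., α lies in the image of M[1/N] → M ⊗ Q. -/
open scoped TensorProduct

/-- The inclusion `ℤ_l → ℚ_l` as a `ℤ`-linear map. -/
noncomputable def padicIncl' (l : ℕ) [Fact l.Prime] : ℤ_[l] →ₗ[ℤ] ℚ_[l] :=
  (PadicInt.Coe.ringHom (p := l)).toAddMonoidHom.toIntLinearMap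

/-- The map `ℚ → ℚ_l` as a `ℤ`-linear map. -/
noncomputable def ratToPadic' (l : ℕ) [Fact l.Prime] : ℚ →ₗ[ℤ] ℚ_[l] :=
  (Rat.castHom ℚ_[l]).toAddMonoidHom.toIntLinearMap

/-- The quotient map `ℚ_l → ℚ_l/ℤ_l` as a `ℤ`-linear map. -/
noncomputable def padicQuot' (l : ℕ) [Fact l.Prime] :
    ℚ_[l] →ₗ[ℤ] (ℚ_[l] ⧸ LinearMap.range (padicIncl' l)) :=
  (LinearMap.range (padicIncl' l)).mkQ

/-- The canonical map `ℤ[1/N] → ℚ` as a `ℤ`-linear map, for `N > 0`. -/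
noncomputable def awayToRat (N : ℕ) (hN : 0 < N) :
    Localization.Away (N : ℤ) →ₗ[ℤ] ℚ :=
  (Localization.awayLift (Int.castRingHom ℚ) (N : ℤ)
    (by
      simp only [eq_intCast, Int.cast_natCast]
      exact isUnit_iff_ne_zero.mpr (by exact_mod_cast hN.ne'))).toAddMonoidHom.toIntLinearMap

section Aux

open LinearMap

/-- Torsion-free `ℤ`-modules are flat. -/
lemma flatZ (M : Type*) [AddCommGroup M] [Module ℤ M]
    (hinj : ∀ n : ℤ, n ≠ 0 → Function.Injective (LinearMap.lsmul ℤ M n)) :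
    Module.Flat ℤ M := by
  rw [Module.Flat.iff_rTensor_injective']
  intro I
  obtain ⟨n, rfl⟩ := Submodule.IsPrincipal.principal I
  set I : Ideal ℤ := Submodule.span ℤ {n}
  have hmem : n ∈ I := Submodule.mem_span_singleton_self n
  set e : ℤ →ₗ[ℤ] I := LinearMap.toSpanSingleton ℤ I ⟨n, hmem⟩ with he
  have hsurj : Function.Surjective e := by
    rintro ⟨y, hy⟩
    obtain ⟨a, ha⟩ := Submodule.mem_span_singleton.mp hy
    exact ⟨a, Subtype.ext (by simpa [he, LinearMap.toSpanSingleton_apply] using ha)⟩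
  have hesurj := LinearMap.rTensor_surjective M hsurj
  by_cases hn : n = 0
  · intro x y _
    obtain ⟨x', rfl⟩ := hesurj x
    obtain ⟨y', rfl⟩ := hesurj y
    have hzero : e = 0 := by
      apply LinearMap.ext
      intro a
      simp only [he, LinearMap.toSpanSingleton_apply, LinearMap.zero_apply]
      exact Subtype.ext (by simp [hn])
    rw [hzero]
    simp [LinearMap.rTensor]
  · have hcomp : I.subtype ∘ₗ e = LinearMap.lsmul ℤ ℤ n := by
      apply LinearMap.ext
      intro a
      simp [he, LinearMap.toSpanSingleton_apply, smul_eq_mul, mul_comm]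
    intro x y hxy
    obtain ⟨x', rfl⟩ := hesurj x
    obtain ⟨y', rfl⟩ := hesurj y
    rw [← LinearMap.rTensor_comp_apply, ← LinearMap.rTensor_comp_apply, hcomp] at hxy
    have hconj : (TensorProduct.lid ℤ M).toLinearMap ∘ₗ rTensor M (LinearMap.lsmul ℤ ℤ n)
        = (LinearMap.lsmul ℤ M n) ∘ₗ (TensorProduct.lid ℤ M).toLinearMap := by
      apply TensorProduct.ext'
      intro a m
      simp only [LinearMap.coe_comp, Function.comp_apply, LinearMap.rTensor_tmul,
        LinearMap.lsmul_apply, LinearEquiv.coe_coe, TensorProduct.lid_tmul, smul_smul, mul_comm,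
        smul_eq_mul]
      exact (‹Module ℤ M›).mul_smul n a m
    have h2 : LinearMap.lsmul ℤ M n (TensorProduct.lid ℤ M x')
        = LinearMap.lsmul ℤ M n (TensorProduct.lid ℤ M y') := by
      have := congrArg (TensorProduct.lid ℤ M) hxy
      calc LinearMap.lsmul ℤ M n (TensorProduct.lid ℤ M x')
          = ((LinearMap.lsmul ℤ M n) ∘ₗ (TensorProduct.lid ℤ M).toLinearMap) x' := rfl
        _ = ((TensorProduct.lid ℤ M).toLinearMap ∘ₗ rTensor M (LinearMap.lsmul ℤ ℤ n)) x' := by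
            rw [hconj]
        _ = ((TensorProduct.lid ℤ M).toLinearMap ∘ₗ rTensor M (LinearMap.lsmul ℤ ℤ n)) y' := by
            simpa using this
        _ = ((LinearMap.lsmul ℤ M n) ∘ₗ (TensorProduct.lid ℤ M).toLinearMap) y' := by rw [hconj]
        _ = LinearMap.lsmul ℤ M n (TensorProduct.lid ℤ M y') := rfl
    exact congrArg (rTensor M e) ((TensorProduct.lid ℤ M).injective (hinj n hn h2))

/-- Base-ring scalars move across the tensor product. -/
lemma move_smul {M : Type*} [AddCommGroup M] [Module ℤ M] (c : ℤ) (m : M) (q : ℚ) :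
    (LinearMap.lsmul ℤ M c m) ⊗ₜ[ℤ] q = m ⊗ₜ[ℤ] (LinearMap.lsmul ℤ ℚ c q) := by
  obtain rfl : ‹Module ℤ M› = AddCommGroup.toIntModule M := Subsingleton.elim _ _
  simp only [LinearMap.lsmul_apply]
  rw [← TensorProduct.smul_tmul', TensorProduct.tmul_smul]

lemma lsmul_rat (c : ℤ) (q : ℚ) : LinearMap.lsmul ℤ ℚ c q = (c : ℚ) * q := by
  simp only [LinearMap.lsmul_apply]
  rw [← algebraMap_smul ℚ c q, smul_eq_mul, eq_intCast]

/-- Every element of `M ⊗ ℚ` is a pure tensor with second factor `1/d`. -/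
lemma exists_tmul_inv_eq {M : Type*} [AddCommGroup M] [Module ℤ M] (α : M ⊗[ℤ] ℚ) :
    ∃ (m : M) (d : ℕ), 0 < d ∧ α = m ⊗ₜ[ℤ] ((d : ℚ))⁻¹ := by
  induction α using TensorProduct.induction_on with
  | zero => exact ⟨0, 1, one_pos, by simp⟩
  | tmul m q =>
      refine ⟨LinearMap.lsmul ℤ M q.num m, q.den, q.pos, ?_⟩
      rw [move_smul, lsmul_rat]
      congr 1
      rw [mul_comm, ← div_eq_inv_mul, Rat.num_div_den]
  | add x y hx hy =>
      obtain ⟨m₁, d₁, h₁, rfl⟩ := hx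
      obtain ⟨m₂, d₂, h₂, rfl⟩ := hy
      refine ⟨LinearMap.lsmul ℤ M (d₂ : ℤ) m₁ + LinearMap.lsmul ℤ M (d₁ : ℤ) m₂,
        d₁ * d₂, mul_pos h₁ h₂, ?_⟩
      rw [TensorProduct.add_tmul, move_smul, move_smul, lsmul_rat, lsmul_rat]
      have e₁ : ((d₂ : ℤ) : ℚ) * ((d₁ * d₂ : ℕ) : ℚ)⁻¹ = ((d₁ : ℚ))⁻¹ := by
        push_cast
        rw [mul_inv]
        field_simp
      have e₂ : ((d₁ : ℤ) : ℚ) * ((d₁ * d₂ : ℕ) : ℚ)⁻¹ = ((d₂ : ℚ))⁻¹ := by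
        push_cast
        rw [mul_inv]
        field_simp
      rw [e₁, e₂]

lemma dvd_pow_of_primes : ∀ d : ℕ, 0 < d → ∀ N : ℕ, (∀ p, p.Prime → p ∣ d → p ∣ N) → d ∣ N ^ d := by
  intro d
  induction d using Nat.strong_induction_on with
  | _ d ih =>
    intro hd N h
    rcases eq_or_lt_of_le (Nat.one_le_iff_ne_zero.mpr hd.ne') with h1 | h1
    · rw [← h1]; exact one_dvd _
    · have hp : d.minFac.Prime := Nat.minFac_prime (by omega)
      obtain ⟨d', hd'⟩ := Nat.minFac_dvd d
      have hppos : 2 ≤ d.minFac := hp.two_le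
      have hd'pos : 0 < d' := by
        rcases Nat.eq_zero_or_pos d' with h0 | h0
        · subst h0; omega
        · exact h0
      have hd'lt : d' < d := by
        calc d' < 2 * d' := by omega
          _ ≤ d.minFac * d' := Nat.mul_le_mul_right _ hppos
          _ = d := hd'.symm
      have hIH : d' ∣ N ^ d' :=
        ih d' hd'lt hd'pos N (fun q hq hqd' => h q hq (hqd'.trans (Dvd.intro_left _ hd'.symm)))
      have hpN : d.minFac ∣ N := h _ hp (Nat.minFac_dvd d)
      have : d ∣ N ^ (d' + 1) := by
        rw [hd', pow_succ']
        exact mul_dvd_mul hpN hIH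
      exact this.trans (pow_dvd_pow N (by omega))

lemma exists_awayToRat_eq (N : ℕ) (hN : 0 < N) (d : ℕ) (hd : 0 < d)
    (h : ∀ p, p.Prime → p ∣ d → p ∣ N) :
    ∃ r : Localization.Away (N : ℤ), awayToRat N hN r = ((d : ℚ))⁻¹ := by
  obtain ⟨e, he⟩ := dvd_pow_of_primes d hd N h
  have hepos : 0 < e := by
    rcases Nat.eq_zero_or_pos e with h0 | h0
    · exfalso; rw [h0, mul_zero] at he; exact (pow_pos hN d).ne' he
    · exact h0
  refine ⟨Localization.mk (e : ℤ) ⟨(N : ℤ) ^ d, d, rfl⟩, ?_⟩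
  have hv : (Int.castRingHom ℚ) ((N : ℤ)) * ((N : ℚ))⁻¹ = 1 := by
    have : ((N : ℚ)) ≠ 0 := by exact_mod_cast hN.ne'
    simp [this]
  have hlift := Localization.awayLift_mk (A := ℚ) (Int.castRingHom ℚ) ((N : ℤ)) (e : ℤ)
    ((N : ℚ))⁻¹ hv d
  have h2 : awayToRat N hN (Localization.mk (e : ℤ) ⟨(N : ℤ) ^ d, d, rfl⟩)
      = ((e : ℤ) : ℚ) * (((N : ℚ))⁻¹) ^ d := by
    exact_mod_cast hlift
  rw [h2]
  have hNd : ((N : ℚ)) ^ d = (d : ℚ) * (e : ℚ) := by exact_mod_cast congrArg (Nat.cast : ℕ → ℚ) he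
  have hd0 : ((d : ℚ)) ≠ 0 := by exact_mod_cast hd.ne'
  have he0 : ((e : ℚ)) ≠ 0 := by exact_mod_cast hepos.ne'
  rw [inv_pow, hNd]
  push_cast
  field_simp

lemma mem_range_padicIncl (l : ℕ) [Fact l.Prime] (x : ℚ_[l]) :
    x ∈ LinearMap.range (padicIncl' l) ↔ ‖x‖ ≤ 1 := by
  constructor
  · rintro ⟨y, rfl⟩
    exact y.2
  · intro h
    exact ⟨⟨x, h⟩, rfl⟩

lemma keyA {M : Type*} [AddCommGroup M] [Module ℤ M] [Module.Flat ℤ M]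
    (l : ℕ) [hl : Fact l.Prime] (m : M)
    (h : LinearMap.lTensor M ((padicQuot' l) ∘ₗ (ratToPadic' l)) (m ⊗ₜ[ℤ] ((l : ℚ))⁻¹) = 0) :
    ∃ m' : M, m = LinearMap.lsmul ℤ M (l : ℤ) m' := by
  have hl0 : (0 : ℝ) < (l : ℝ) := by exact_mod_cast hl.1.pos
  set x : ℚ_[l] := ratToPadic' l ((l : ℚ))⁻¹ with hx
  set ξ : ℚ_[l] ⧸ LinearMap.range (padicIncl' l) := padicQuot' l x with hξdef
  have hxnorm : ‖x‖ = (l : ℝ) := by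
    have hxe : x = ((l : ℚ_[l]))⁻¹ := by
      rw [hx]
      show (Rat.castHom ℚ_[l]) ((l : ℚ))⁻¹ = _
      rw [map_inv₀, map_natCast]
    rw [hxe, norm_inv, Padic.norm_p, inv_inv]
  have hξ : ∀ a : ℤ, LinearMap.toSpanSingleton ℤ _ ξ a = 0 ↔ (l : ℤ) ∣ a := by
    intro a
    rw [LinearMap.toSpanSingleton_apply]
    have h1 : a • ξ = Submodule.Quotient.mk (a • x) :=
      ((LinearMap.range (padicIncl' l)).mkQ.map_smul a x).symm
    rw [h1, Submodule.Quotient.mk_eq_zero, mem_range_padicIncl]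
    have h2 : ‖a • x‖ = ‖((a : ℤ) : ℚ_[l])‖ * (l : ℝ) := by
      rw [show a • x = ((a : ℤ) : ℚ_[l]) * x from zsmul_eq_mul x a, norm_mul, hxnorm]
    rw [h2, ← le_div_iff₀ hl0, one_div]
    have h3 : ((l : ℝ))⁻¹ = (l : ℝ) ^ (-(1 : ℕ) : ℤ) := by
      norm_num
    rw [h3, Padic.norm_int_le_pow_iff_dvd a 1, pow_one]
  have hle : Ideal.span {(l : ℤ)} ≤ LinearMap.ker (LinearMap.toSpanSingleton ℤ _ ξ) := by
    intro z hz
    obtain ⟨a, ha⟩ := Ideal.mem_span_singleton'.mp hz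
    rw [LinearMap.mem_ker, hξ]
    exact ⟨a, by rw [← ha, mul_comm]⟩
  set f := Submodule.liftQ (Ideal.span {(l : ℤ)}) (LinearMap.toSpanSingleton ℤ _ ξ) hle with hf
  have finj : Function.Injective f := by
    rw [← LinearMap.ker_eq_bot]
    apply Submodule.ker_liftQ_eq_bot
    intro z hz
    rw [LinearMap.mem_ker] at hz
    exact Ideal.mem_span_singleton.mpr ((hξ z).mp hz)
  have hm1 : m ⊗ₜ[ℤ] (Submodule.Quotient.mk 1 : ℤ ⧸ Ideal.span {(l : ℤ)}) = 0 := by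
    apply Module.Flat.lTensor_preserves_injective_linearMap f finj
    rw [map_zero, LinearMap.lTensor_tmul, hf, Submodule.liftQ_apply,
      LinearMap.toSpanSingleton_apply, one_smul]
    have h' := h
    rw [LinearMap.lTensor_tmul] at h'
    exact h'
  have hex : Function.Exact (LinearMap.lsmul ℤ ℤ (l : ℤ)) (Ideal.span {(l : ℤ)}).mkQ := by
    intro z
    rw [Submodule.mkQ_apply, Submodule.Quotient.mk_eq_zero]
    constructor
    · intro hz
      obtain ⟨a, ha⟩ := Ideal.mem_span_singleton'.mp hz
      exact ⟨a, by simpa [smul_eq_mul, mul_comm] using ha⟩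
    · rintro ⟨a, rfl⟩
      exact Ideal.mem_span_singleton'.mpr ⟨a, by simp [smul_eq_mul, mul_comm]⟩
  have htex := lTensor_exact M hex (Submodule.mkQ_surjective _)
  have hmem := (htex (m ⊗ₜ[ℤ] (1 : ℤ))).mp (by
    rw [LinearMap.lTensor_tmul]
    exact hm1)
  obtain ⟨z, hz⟩ := hmem
  refine ⟨TensorProduct.rid ℤ M z, ?_⟩
  have hconj : ∀ w : M ⊗[ℤ] ℤ,
      TensorProduct.rid ℤ M (LinearMap.lTensor M (LinearMap.lsmul ℤ ℤ (l : ℤ)) w)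
      = LinearMap.lsmul ℤ M (l : ℤ) (TensorProduct.rid ℤ M w) := by
    intro w
    induction w using TensorProduct.induction_on with
    | zero => simp
    | tmul m' a =>
        simp only [LinearMap.lTensor_tmul, LinearMap.lsmul_apply, TensorProduct.rid_tmul,
          smul_smul, mul_comm, smul_eq_mul]
        rw [mul_comm]
        exact (‹Module ℤ M›).mul_smul (l : ℤ) a m'
    | add u v hu hv => simp only [map_add, hu, hv]
  have hrid : TensorProduct.rid ℤ M (m ⊗ₜ[ℤ] (1 : ℤ)) = m := by simp; exact (‹Module ℤ M›).one_smul m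
  calc m = TensorProduct.rid ℤ M (m ⊗ₜ[ℤ] (1 : ℤ)) := hrid.symm
    _ = TensorProduct.rid ℤ M (LinearMap.lTensor M (LinearMap.lsmul ℤ ℤ (l : ℤ)) z) := by
        rw [hz]
    _ = LinearMap.lsmul ℤ M (l : ℤ) (TensorProduct.rid ℤ M z) := hconj z

lemma lemB {M : Type*} [AddCommGroup M] [Module ℤ M] [Module.Flat ℤ M] (N : ℕ) (hN : 0 < N) :
    ∀ d : ℕ, 0 < d → ∀ m : M,
    (∀ (l : ℕ) [Fact l.Prime], ¬ l ∣ N →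
      LinearMap.lTensor M ((padicQuot' l) ∘ₗ (ratToPadic' l)) (m ⊗ₜ[ℤ] ((d : ℚ))⁻¹) = 0) →
    ∃ β : M ⊗[ℤ] Localization.Away (N : ℤ),
      LinearMap.lTensor M (awayToRat N hN) β = m ⊗ₜ[ℤ] ((d : ℚ))⁻¹ := by
  intro d
  induction d using Nat.strong_induction_on with
  | _ d ih =>
    intro hd m hm
    by_cases hall : ∀ p, p.Prime → p ∣ d → p ∣ N
    · obtain ⟨r, hr⟩ := exists_awayToRat_eq N hN d hd hall
      exact ⟨m ⊗ₜ[ℤ] r, by rw [LinearMap.lTensor_tmul, hr]⟩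
    · push_neg at hall
      obtain ⟨l, hlp, hld, hlN⟩ := hall
      haveI : Fact l.Prime := ⟨hlp⟩
      have hl0 : ((l : ℚ)) ≠ 0 := by exact_mod_cast hlp.pos.ne'
      have hd0 : ((d : ℚ)) ≠ 0 := by exact_mod_cast hd.ne'
      set c : ℤ := ((d / l : ℕ) : ℤ) with hc
      have hsc : m ⊗ₜ[ℤ] (LinearMap.lsmul ℤ ℚ c ((d : ℚ))⁻¹) = m ⊗ₜ[ℤ] ((l : ℚ))⁻¹ := by
        congr 1
        rw [lsmul_rat, hc, Int.cast_natCast, Nat.cast_div hld hl0]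
        field_simp
      have hcomm : ((padicQuot' l) ∘ₗ (ratToPadic' l)) ∘ₗ (LinearMap.lsmul ℤ ℚ c)
          = (LinearMap.lsmul ℤ (ℚ_[l] ⧸ LinearMap.range (padicIncl' l)) c) ∘ₗ
            ((padicQuot' l) ∘ₗ (ratToPadic' l)) := by
        apply LinearMap.ext
        intro q
        simp only [LinearMap.coe_comp, Function.comp_apply, LinearMap.lsmul_apply,
          LinearMap.map_smul]
      have h1 : LinearMap.lTensor M ((padicQuot' l) ∘ₗ (ratToPadic' l))
          (m ⊗ₜ[ℤ] ((l : ℚ))⁻¹) = 0 := by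
        rw [← hsc, ← LinearMap.lTensor_tmul M (LinearMap.lsmul ℤ ℚ c),
          ← LinearMap.lTensor_comp_apply, hcomm, LinearMap.lTensor_comp_apply,
          hm l hlN, map_zero]
      obtain ⟨m', hm'⟩ := keyA l m h1
      have heq : m ⊗ₜ[ℤ] ((d : ℚ))⁻¹ = m' ⊗ₜ[ℤ] (((d / l : ℕ) : ℚ))⁻¹ := by
        rw [hm', move_smul, lsmul_rat]
        congr 1
        rw [Nat.cast_div hld hl0, inv_div, div_eq_mul_inv, Int.cast_natCast]
      have hdl_pos : 0 < d / l := Nat.div_pos (Nat.le_of_dvd hd hld) hlp.pos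
      have hdl_lt : d / l < d := Nat.div_lt_self hd hlp.one_lt
      obtain ⟨β, hβ⟩ := ih (d / l) hdl_lt hdl_pos m' (by
        intro l' _ hl'N
        rw [← heq]
        exact hm l' hl'N)
      exact ⟨β, by rw [hβ, heq]⟩

end Aux

/-- Let `M` be an abelian group, `α ∈ M ⊗ ℚ`, and `N > 0`. If the image of `α` in
`M ⊗ ℚ_l/ℤ_l` vanishes for every prime `l` not dividing `N`, then `α` is integral with
respect to `M[1/N] = M ⊗ ℤ[1/N]`: it lies in the image of `M ⊗ ℤ[1/N] → M ⊗ ℚ`. -/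
theorem stmt_15 {M : Type*} [AddCommGroup M] (α : M ⊗[ℤ] ℚ) (N : ℕ) (hN : 0 < N)
    (h : ∀ (l : ℕ) [Fact l.Prime], ¬ l ∣ N →
      LinearMap.lTensor M ((padicQuot' l) ∘ₗ (ratToPadic' l)) α = 0) :
    ∃ β : M ⊗[ℤ] Localization.Away (N : ℤ),
      LinearMap.lTensor M (awayToRat N hN) β = α := by
  set T := Submodule.torsion ℤ M with hT
  -- the torsion part dies in `M ⊗ ℚ`
  have hzero : LinearMap.rTensor ℚ T.subtype = 0 := by
    apply TensorProduct.ext'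
    intro t q
    obtain ⟨n, hn⟩ := t.2
    have hn0 : (((n : ℤ) : ℚ)) ≠ 0 := by
      exact_mod_cast nonZeroDivisors.coe_ne_zero n
    have hq : q = LinearMap.lsmul ℤ ℚ (n : ℤ) ((((n : ℤ) : ℚ))⁻¹ * q) := by
      rw [lsmul_rat]
      field_simp
    have htz : LinearMap.lsmul ℤ M (n : ℤ) (T.subtype t) = 0 := hn
    rw [LinearMap.rTensor_tmul, LinearMap.zero_apply]
    calc (T.subtype t) ⊗ₜ[ℤ] q
        = (T.subtype t) ⊗ₜ[ℤ] (LinearMap.lsmul ℤ ℚ (n : ℤ) ((((n : ℤ) : ℚ))⁻¹ * q)) := by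
          rw [← hq]
      _ = (LinearMap.lsmul ℤ M (n : ℤ) (T.subtype t)) ⊗ₜ[ℤ] ((((n : ℤ) : ℚ))⁻¹ * q) :=
          (move_smul _ _ _).symm
      _ = (0 : M) ⊗ₜ[ℤ] ((((n : ℤ) : ℚ))⁻¹ * q) := by rw [htz]
      _ = 0 := TensorProduct.zero_tmul _ _
  have hinjQ : Function.Injective (LinearMap.rTensor ℚ T.mkQ) := by
    rw [← LinearMap.ker_eq_bot, rTensor_mkQ, hzero, LinearMap.range_zero]
  haveI hflat : Module.Flat ℤ (M ⧸ T) := by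
    apply flatZ
    intro n hn a b hab
    simp only [LinearMap.lsmul_apply] at hab
    exact smul_right_injective _ hn hab
  obtain ⟨m, d, hd, hα⟩ := exists_tmul_inv_eq (LinearMap.rTensor ℚ T.mkQ α)
  have hm : ∀ (l : ℕ) [Fact l.Prime], ¬ l ∣ N →
      LinearMap.lTensor (M ⧸ T) ((padicQuot' l) ∘ₗ (ratToPadic' l)) (m ⊗ₜ[ℤ] ((d : ℚ))⁻¹)
        = 0 := by
    intro l _ hlN
    rw [← hα, ← LinearMap.comp_apply, LinearMap.lTensor_comp_rTensor,
      ← LinearMap.rTensor_comp_lTensor, LinearMap.comp_apply, h l hlN, map_zero]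
  obtain ⟨β', hβ'⟩ := lemB N hN d hd m hm
  obtain ⟨β, hβ⟩ := LinearMap.rTensor_surjective (Localization.Away (N : ℤ))
    (Submodule.mkQ_surjective T) β'
  refine ⟨β, hinjQ ?_⟩
  rw [← LinearMap.comp_apply, LinearMap.rTensor_comp_lTensor,
    ← LinearMap.lTensor_comp_rTensor, LinearMap.comp_apply, hβ, hβ', hα]
end
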